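/- For all integers q ≥ 2 and n ≥ 1, and under each of the scenarios (∗•) and (••), the family 𝓖_q is n-cell implementable if and only if q ≤ 2n + 1. -/

import Mathlib

/-- The alphabet 𝔹• = {0, 1, ∗, •}. -/
inductive BB : Type
  | zero
  | one
  | star
  | reject
deriving DecidableEq

instance instFintypeBB : Fintype BB :=
  ⟨{BB.zero, BB.one, BB.star, BB.reject}, fun x => by cases x <;> simp⟩

/-- The cell function T : 𝔹• × 𝔹• → 𝔹: T(u,ϑ) = 1 iff u = ∗, or ϑ = ∗,
or u,ϑ ∈ 𝔹 with u = ϑ. -/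
def Tcell : BB → BB → Bool
  | BB.star, _ => true
  | _, BB.star => true
  | BB.zero, BB.zero => true
  | BB.one, BB.one => true
  | _, _ => false

/-- The word-level function T(u,ϑ) = ⋀_{j<n} T(u_j, ϑ_j). -/
def Tword {n : ℕ} (u θ : Fin n → BB) : Bool :=
  decide (∀ j, Tcell (u j) (θ j) = true)

/-- The alphabet 𝔹 = {0,1} ⊆ 𝔹•. -/
def Bcirc : Set BB := {BB.zero, BB.one}

/-- The alphabet 𝔹∗ = {0,1,∗} ⊆ 𝔹•. -/
def Bstar : Set BB := {BB.zero, BB.one, BB.star}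

/-- The full alphabet 𝔹•. -/
def Bdot : Set BB := Set.univ

/-- A family Φ of functions {0,…,q−1} → 𝔹 is n-cell implementable under
scenario (A,B) if there are mappings u : {0,…,q−1} → A^n and ϑ : Φ → B^n
with f(x) = T(u(x), ϑ(f)) for all f ∈ Φ and x. -/
def Implementable (A B : Set BB) (n q : ℕ) (Φ : Set (Fin q → Bool)) : Prop :=
  ∃ u : Fin q → Fin n → BB, ∃ θ : (Fin q → Bool) → Fin n → BB,
    (∀ x j, u x j ∈ A) ∧ (∀ f ∈ Φ, ∀ j, θ f j ∈ B) ∧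
    (∀ f ∈ Φ, ∀ x, f x = Tword (u x) (θ f))

/-- The family 𝓔_q = { x ↦ [x = t] : t ∈ [q⟩ }. -/
def Eset (q : ℕ) : Set (Fin q → Bool) :=
  { f | ∃ t : Fin q, f = fun x => decide (x = t) }

/-- The family 𝓝_q = { x ↦ [x ≠ t] : t ∈ [q⟩ }. -/
def Nset (q : ℕ) : Set (Fin q → Bool) :=
  { f | ∃ t : Fin q, f = fun x => decide (x ≠ t) }

/-- The family 𝓖_q = { x ↦ [x ≥ t] : t ∈ [q⟩ }. -/
def Gset (q : ℕ) : Set (Fin q → Bool) :=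
  { f | ∃ t : Fin q, f = fun x => decide (t ≤ x) }

/-- The family 𝓛_q = { x ↦ [x ≤ t] : t ∈ [q⟩ }. -/
def Lset (q : ℕ) : Set (Fin q → Bool) :=
  { f | ∃ t : Fin q, f = fun x => decide (x ≤ t) }

/-! For the construction, cell `j` is responsible for the thresholds `2j+1` and `2j+2`: the points
`x < 2j+1` carry `0` there, the point `2j+1` carries `1` and the later points carry `∗`, while the
threshold `2j+1` writes `1` and the threshold `2j+2` writes `•` into cell `j` (all other thresholds
write `∗`). For the bound, every threshold `t ≥ 1` needs a cell in which the point `t - 1` is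
rejected. If one cell served three thresholds `t₁ < t₂ < t₃`, the point `t₃ - 1` would have to
match there the two distinct non-`∗` symbols written by `t₁` and `t₂`, so it would be `∗` and could
not be rejected by `t₃`. Hence `q - 1 ≤ 2n`. -/

lemma Tcell_star_left (w : BB) : Tcell BB.star w = true := by cases w <;> rfl

lemma Tcell_star_right (a : BB) : Tcell a BB.star = true := by cases a <;> rfl

lemma eq_star_of_Tcell_of_Tcell {c w₁ w₂ : BB} (hw₁ : w₁ ≠ BB.star) (hw₂ : w₂ ≠ BB.star)
    (hne : w₁ ≠ w₂) (h₁ : Tcell c w₁ = true) (h₂ : Tcell c w₂ = true) : c = BB.star := by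
  cases c <;> cases w₁ <;> cases w₂ <;> simp_all [Tcell]

lemma Implementable.mono {A A' B B' : Set BB} {n q : ℕ} {Φ : Set (Fin q → Bool)}
    (hA : A ⊆ A') (hB : B ⊆ B') (h : Implementable A B n q Φ) : Implementable A' B' n q Φ := by
  obtain ⟨u, θ, hu, hθ, hT⟩ := h
  exact ⟨u, θ, fun x j => hA (hu x j), fun f hf j => hB (hθ f hf j), hT⟩

lemma implementable_range_iff {A B : Set BB} {n q : ℕ} {ι : Type*} (F : ι → Fin q → Bool) :
    Implementable A B n q (Set.range F) ↔
      ∃ u : Fin q → Fin n → BB, ∃ θ : ι → Fin n → BB,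
        (∀ x j, u x j ∈ A) ∧ (∀ i j, θ i j ∈ B) ∧ ∀ i x, F i x = Tword (u x) (θ i) := by
  classical
  constructor
  · rintro ⟨u, θ, hu, hθ, hT⟩
    exact ⟨u, θ ∘ F, hu, fun i => hθ _ ⟨i, rfl⟩, fun i => hT _ ⟨i, rfl⟩⟩
  · rintro ⟨u, θ, hu, hθ, hT⟩
    refine ⟨u, fun f => if h : f ∈ Set.range F then θ h.choose else fun _ => BB.star, hu, ?_, ?_⟩
    · rintro f hf j
      simpa only [dif_pos hf] using hθ _ j
    · rintro f hf x
      simpa only [dif_pos hf, hf.choose_spec] using hT hf.choose x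

lemma Gset_eq_range (q : ℕ) : Gset q = Set.range fun (t x : Fin q) => decide (t ≤ x) := by
  ext f
  exact exists_congr fun _ => eq_comm

lemma Finset.exists_lt_lt_of_two_lt_card {α : Type*} [LinearOrder α] {s : Finset α}
    (hs : 2 < s.card) : ∃ a ∈ s, ∃ b ∈ s, ∃ c ∈ s, a < b ∧ b < c := by
  obtain ⟨t, hts, ht⟩ := Finset.exists_subset_card_eq hs
  let e := t.orderEmbOfFin ht
  exact ⟨e 0, hts (t.orderEmbOfFin_mem ht 0), e 1, hts (t.orderEmbOfFin_mem ht 1),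
    e 2, hts (t.orderEmbOfFin_mem ht 2), e.strictMono (by decide), e.strictMono (by decide)⟩

def pointCode (x j : ℕ) : BB :=
  if x < 2 * j + 1 then BB.zero else if x = 2 * j + 1 then BB.one else BB.star

def thresholdCode (t j : ℕ) : BB :=
  if t = 2 * j + 1 then BB.one else if t = 2 * j + 2 then BB.reject else BB.star

lemma pointCode_mem_Bstar (x j : ℕ) : pointCode x j ∈ Bstar := by
  unfold pointCode Bstar
  split_ifs <;> simp

lemma Tcell_pointCode_thresholdCode (x t j : ℕ) :
    Tcell (pointCode x j) (thresholdCode t j) = true ↔ (t = 2 * j + 1 ∨ t = 2 * j + 2 → t ≤ x) := by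
  unfold pointCode thresholdCode
  split_ifs <;> simp [Tcell] <;> omega

lemma Tword_pointCode_thresholdCode {n t : ℕ} (ht : t ≤ 2 * n) (x : ℕ) :
    Tword (fun j : Fin n => pointCode x j) (fun j => thresholdCode t j) = decide (t ≤ x) := by
  simp only [Tword, Tcell_pointCode_thresholdCode, decide_eq_decide]
  refine ⟨fun h => ?_, fun h _ _ => h⟩
  rcases Nat.eq_zero_or_pos t with rfl | ht₀
  · exact Nat.zero_le x
  · exact h ⟨(t - 1) / 2, by omega⟩ (by simp only; omega)

lemma Gset_implementable_of_le {n q : ℕ} (hq : q ≤ 2 * n + 1) :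
    Implementable Bstar Bdot n q (Gset q) := by
  rw [Gset_eq_range, implementable_range_iff]
  refine ⟨fun x j => pointCode x j, fun t j => thresholdCode t j,
    fun x j => pointCode_mem_Bstar x j, fun _ _ => Set.mem_univ _, fun t x => ?_⟩
  rw [Tword_pointCode_thresholdCode (by omega)]
  exact decide_eq_decide.mpr Fin.le_def

lemma Tcell_eq_true_of_two_earlier_witnesses {m n : ℕ} {u θ : Fin (m + 1) → Fin n → BB}
    (hT : ∀ t x, decide (t ≤ x) = Tword (u x) (θ t)) {s₁ s₂ s₃ : Fin m} (h₁₂ : s₁ < s₂)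
    (h₂₃ : s₂ < s₃) (j : Fin n) (h₁ : Tcell (u s₁.castSucc j) (θ s₁.succ j) = false)
    (h₂ : Tcell (u s₂.castSucc j) (θ s₂.succ j) = false) :
    Tcell (u s₃.castSucc j) (θ s₃.succ j) = true := by
  have accepts : ∀ {s s' : Fin m}, s < s' → Tcell (u s'.castSucc j) (θ s.succ j) = true :=
    fun hs => of_decide_eq_true ((hT _ _).symm.trans (decide_eq_true
      (Fin.succ_le_castSucc_iff.mpr hs))) j
  have hstar : u s₃.castSucc j = BB.star :=
    eq_star_of_Tcell_of_Tcell (fun h => by simp [h, Tcell_star_right] at h₁)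
      (fun h => by simp [h, Tcell_star_right] at h₂)
      (fun h => by simp [← h, accepts h₁₂] at h₂)
      (accepts (h₁₂.trans h₂₃)) (accepts h₂₃)
  rw [hstar, Tcell_star_left]

lemma le_of_threshold_Tword {q n : ℕ} {u θ : Fin q → Fin n → BB}
    (hT : ∀ t x, decide (t ≤ x) = Tword (u x) (θ t)) : q ≤ 2 * n + 1 := by
  obtain _ | m := q
  · omega
  have witness : ∀ s : Fin m, ∃ j, Tcell (u s.castSucc j) (θ s.succ j) = false := by
    intro s
    have h := (hT s.succ s.castSucc).symm
    simpa [Tword, Fin.castSucc_lt_succ] using h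
  choose g hg using witness
  by_contra! hm
  obtain ⟨j, hj⟩ := Fintype.exists_lt_card_fiber_of_mul_lt_card g (n := 2)
    (by simp only [Fintype.card_fin]; omega)
  obtain ⟨s₁, hs₁, s₂, hs₂, s₃, hs₃, h₁₂, h₂₃⟩ := Finset.exists_lt_lt_of_two_lt_card hj
  simp only [Finset.mem_filter, Finset.mem_univ, true_and] at hs₁ hs₂ hs₃
  have h₃ := Tcell_eq_true_of_two_earlier_witnesses hT h₁₂ h₂₃ j (hs₁ ▸ hg s₁) (hs₂ ▸ hg s₂)
  simp [← hs₃, hg s₃] at h₃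

lemma le_of_Gset_implementable {A B : Set BB} {n q : ℕ}
    (h : Implementable A B n q (Gset q)) : q ≤ 2 * n + 1 := by
  rw [Gset_eq_range, implementable_range_iff] at h
  obtain ⟨u, θ, -, -, hT⟩ := h
  exact le_of_threshold_Tword hT

theorem Gset_implementable_starReject_rejectReject_general (q n : ℕ) :
    (Implementable Bstar Bdot n q (Gset q) ↔ q ≤ 2 * n + 1) ∧
    (Implementable Bdot Bdot n q (Gset q) ↔ q ≤ 2 * n + 1) :=
  ⟨⟨le_of_Gset_implementable, Gset_implementable_of_le⟩,
    ⟨le_of_Gset_implementable,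
      fun h => (Gset_implementable_of_le h).mono (Set.subset_univ _) subset_rfl⟩⟩

theorem Gset_implementable_starReject_rejectReject (q n : ℕ)
    (hq : 2 ≤ q) (hn : 1 ≤ n) :
    (Implementable Bstar Bdot n q (Gset q) ↔ q ≤ 2 * n + 1) ∧
    (Implementable Bdot Bdot n q (Gset q) ↔ q ≤ 2 * n + 1) :=
  Gset_implementable_starReject_rejectReject_general q n
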